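/- arXiv:1302.3973 — 2 statements merged into one kernel-verified Lean document; each statement's English description precedes it below -/
import Mathlib

section
/- In the deepening construction, the limit profile σ (defined by σ(γ) := s_{|γ|+1}(γ)) satisfies: for every n, if a := d(p_{<n}) where p := p(σ), then g_a(p_{<n}, σ) = G_a(p_{<n}). That is, along the limit play, every node owner's guarantee is the best guarantee. -/
variable {C A O : Type*}

/-- The prefix of length `n` of an infinite play. -/
def pref (p : ℕ → C) (n : ℕ) : List C := List.ofFn (fun i : Fin n => p (i : ℕ))

/-- Plays compatible with a partial strategy profile. -/
def Plays (s : List C → Option C) : Set (ℕ → C) :=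
  {p | ∀ (n : ℕ) (c : C), s (pref p n) = some c → p n = c}

/-- The history of length n induced by a total strategy profile. -/
def hist (t : List C → C) : ℕ → List C
  | 0 => []
  | n + 1 => hist t n ++ [t (hist t n)]

/-- The play induced by a total strategy profile: p(t)_n = t(p(t)_{<n}). -/
def play (t : List C → C) (n : ℕ) : C := t (hist t n)

open Classical in
/-- Restriction of a partial strategy profile to a set of histories. -/
noncomputable def restr (s : List C → Option C) (X : Set (List C)) (γ : List C) : Option C :=
  if γ ∈ X then s γ else none

/-- Restriction of a total strategy profile to a set of histories (as a partial one). -/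
noncomputable def restrT (s : List C → C) (X : Set (List C)) : List C → Option C :=
  restr (fun γ => some (s γ)) X

/-- γC^* : finite sequences extending γ. -/
def ext (γ : List C) : Set (List C) := {δ | γ <+: δ}

/-- γC^ω : infinite sequences extending γ. -/
def extω (γ : List C) : Set (ℕ → C) := {p | pref p γ.length = γ}


/-- A <ₐ-terminal interval. -/
def Terminal (lt : O → O → Prop) (I : Set O) : Prop := ∀ x y, lt x y → x ∈ I → y ∈ I

/-- The guarantee g_a(γ, s) of agent a at node γ under strategy profile s. -/
noncomputable def guar (d : List C → A) (v : (ℕ → C) → O) (lt : A → O → O → Prop)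
    (a : A) (γ : List C) (s : List C → C) : Set O :=
  {o | ∃ p ∈ Plays (restrT s {δ | δ ∈ ext γ ∧ d δ = a}) ∩ extω γ, lt a (v p) o ∨ v p = o}

/-- The best guarantee G_a(γ). -/
noncomputable def bestGuar (d : List C → A) (v : (ℕ → C) → O) (lt : A → O → O → Prop)
    (a : A) (γ : List C) : Set O :=
  ⋂ s : List C → C, guar d v lt a γ s

/-- Nash equilibrium of an infinite sequential game. -/
def NashEq (d : List C → A) (v : (ℕ → C) → O) (prec : A → O → O → Prop)
    (s : List C → C) : Prop :=
  ∀ (a : A) (s' : List C → C), (∀ γ, d γ ≠ a → s' γ = s γ) →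
    ¬ prec a (v (play s)) (v (play s'))

/-- Winning strategy for agent a (owning D) in ⟨C, D, W⟩. -/
def WinA (D : Set (List C)) (W : Set (ℕ → C)) (sa : List C → C) : Prop :=
  ∀ t : List C → C, (∀ γ ∈ D, t γ = sa γ) → play t ∈ W

/-- Winning strategy for agent b (owning C^* \ D) in ⟨C, D, W⟩. -/
def WinB (D : Set (List C)) (W : Set (ℕ → C)) (sb : List C → C) : Prop :=
  ∀ t : List C → C, (∀ γ ∉ D, t γ = sb γ) → play t ∉ W

/-- Determinacy of the two-agent win-lose game ⟨C, D, W⟩. -/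
def Determined (D : Set (List C)) (W : Set (ℕ → C)) : Prop :=
  (∃ sa, WinA D W sa) ∨ (∃ sb, WinB D W sb)

/-- The deepening construction: at step n, the owner a of the length-n node γ of the
current induced play refines his/her strategy inside the subtree rooted at γ to attain
the best guarantee there, unless the guarantee is already the best one. -/
def IsDeepening {C A O : Type*} (d : List C → A) (v : (ℕ → C) → O)
    (lt : A → O → O → Prop) (s : ℕ → List C → C) : Prop :=
  ∀ n : ℕ,
    (guar d v lt (d (pref (play (s n)) n)) (pref (play (s n)) n) (s n)
        = bestGuar d v lt (d (pref (play (s n)) n)) (pref (play (s n)) n) →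
      s (n + 1) = s n) ∧
    (guar d v lt (d (pref (play (s n)) n)) (pref (play (s n)) n) (s n)
        ≠ bestGuar d v lt (d (pref (play (s n)) n)) (pref (play (s n)) n) →
      ∃ μ : List C → C,
        guar d v lt (d (pref (play (s n)) n)) (pref (play (s n)) n) μ
          = bestGuar d v lt (d (pref (play (s n)) n)) (pref (play (s n)) n) ∧
        (∀ δ, δ ∈ ext (pref (play (s n)) n) ∧ d δ = d (pref (play (s n)) n) →
          s (n + 1) δ = μ δ) ∧
        (∀ δ, ¬ (δ ∈ ext (pref (play (s n)) n) ∧ d δ = d (pref (play (s n)) n)) →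
          s (n + 1) δ = s n δ))


/-! Write `γᵢ` for the length-`i` node of the play of `σ`. Stage `i` changes the profile only
inside the subtree at `γᵢ`, so the profiles `s m` converge to `σ` nodewise and their plays to
the play of `σ`. Once the owner `a` of `γₙ` has optimised there, every later `s m` still
guarantees `Gₐ(γₙ)` at `γₙ`: a later change by `a` below `γₙ` is made at some `γₘ` and attains
`Gₐ(γₘ)`, which `s m` already guaranteed. Hence if `a` is not optimal at stages `i < j`, an
outcome in `gₐ(γᵢ, sᵢ) \ Gₐ(γᵢ)` lies `<ₐ`-below every outcome in `gₐ(γⱼ, sⱼ) ⊆ Gₐ(γᵢ)`, so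
well-foundedness leaves each agent finitely many non-optimal stages. After them `s m` agrees
with `σ` at all nodes of `a`, and `gₐ(γₙ, σ) = gₐ(γₙ, s m) = Gₐ(γₙ)`. -/

section Prefixes

variable {C : Type*}

theorem pref_length (p : ℕ → C) (n : ℕ) : (pref p n).length = n := List.length_ofFn

theorem pref_succ (p : ℕ → C) (n : ℕ) : pref p (n + 1) = pref p n ++ [p n] := by
  simp only [pref, List.ofFn_succ', List.concat_eq_append, Fin.val_castSucc, Fin.val_last]

theorem pref_take (p : ℕ → C) {k n : ℕ} (h : k ≤ n) : (pref p n).take k = pref p k :=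
  List.ext_getElem (by simp [pref_length, h]) fun i _ _ => by simp [pref]

theorem pref_prefix (p : ℕ → C) {k n : ℕ} (h : k ≤ n) : pref p k <+: pref p n :=
  pref_take p h ▸ List.take_prefix _ _

theorem pref_eq_pref_iff {p q : ℕ → C} {n : ℕ} : pref p n = pref q n ↔ ∀ j < n, p j = q j := by
  simp only [pref, List.ofFn_inj, funext_iff, Fin.forall_iff]

theorem mem_extω_pref_iff {p q : ℕ → C} {n : ℕ} : q ∈ extω (pref p n) ↔ ∀ j < n, q j = p j := by
  simp only [extω, Set.mem_ofPred_eq, pref_length, pref_eq_pref_iff]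

theorem mem_extω_of_pref_mem_ext {p : ℕ → C} {γ : List C} {j : ℕ} (h : pref p j ∈ ext γ) :
    p ∈ extω γ := by
  have hlen : γ.length ≤ j := pref_length p j ▸ h.length_le
  exact (pref_take p hlen).symm.trans (List.prefix_iff_eq_take.mp h).symm

theorem pref_play (t : List C → C) (n : ℕ) : pref (play t) n = hist t n := by
  induction n with
  | zero => rfl
  | succ n ih => rw [pref_succ, ih]; rfl

theorem play_eq (t : List C → C) (n : ℕ) : play t n = t (pref (play t) n) := by
  rw [pref_play]; rfl

end Prefixes

section Guarantees

variable {C A O : Type*} {d : List C → A} {v : (ℕ → C) → O} {lt : A → O → O → Prop}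

theorem mem_plays_restrT {t : List C → C} {X : Set (List C)} {p : ℕ → C} :
    p ∈ Plays (restrT t X) ↔ ∀ n, pref p n ∈ X → p n = t (pref p n) := by
  refine ⟨fun h n hn => h n _ (by simp [restrT, restr, hn]), fun h n c hc => ?_⟩
  by_cases hn : pref p n ∈ X
  · simp only [restrT, restr, hn, if_true, Option.some.injEq] at hc
    exact hc ▸ h n hn
  · simp [restrT, restr, hn] at hc

theorem restrT_congr {t t' : List C → C} {X : Set (List C)} (h : ∀ δ ∈ X, t δ = t' δ) :
    restrT t X = restrT t' X := by
  funext δ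
  by_cases hδ : δ ∈ X <;> simp [restrT, restr, hδ, h]

theorem plays_restrT_anti {t : List C → C} {X Y : Set (List C)} (hXY : X ⊆ Y) :
    Plays (restrT t Y) ⊆ Plays (restrT t X) := fun _ hp =>
  mem_plays_restrT.2 fun n hn => mem_plays_restrT.1 hp n (hXY hn)

theorem guar_congr {a : A} {γ : List C} {t t' : List C → C}
    (h : ∀ δ ∈ ext γ, d δ = a → t δ = t' δ) :
    guar d v lt a γ t = guar d v lt a γ t' := by
  rw [guar, guar, restrT_congr fun δ hδ => h δ hδ.1 hδ.2]

theorem bestGuar_subset_guar {a : A} {γ : List C} (t : List C → C) :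
    bestGuar d v lt a γ ⊆ guar d v lt a γ t :=
  Set.iInter_subset _ t

theorem terminal_guar {a : A} [IsTrans O (lt a)] (γ : List C) (t : List C → C) :
    Terminal (lt a) (guar d v lt a γ t) := by
  rintro x y hxy ⟨p, hp, hpx | rfl⟩
  exacts [⟨p, hp, Or.inl (_root_.trans hpx hxy)⟩, ⟨p, hp, Or.inl hxy⟩]

theorem terminal_bestGuar {a : A} [IsTrans O (lt a)] (γ : List C) :
    Terminal (lt a) (bestGuar d v lt a γ) := fun x y hxy hx =>
  Set.mem_iInter.2 fun t => terminal_guar γ t x y hxy (Set.mem_iInter.1 hx t)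

theorem guar_subset_union {a : A} {γ γ' : List C} {t t' : List C → C} (hγ : γ <+: γ')
    (h : ∀ δ ∈ ext γ, d δ = a → δ ∉ ext γ' → t' δ = t δ) :
    guar d v lt a γ t' ⊆ guar d v lt a γ t ∪ guar d v lt a γ' t' := by
  rintro o ⟨p, ⟨hp, hpγ⟩, hpo⟩
  by_cases hpγ' : p ∈ extω γ'
  · refine Or.inr ⟨p, ⟨plays_restrT_anti ?_ hp, hpγ'⟩, hpo⟩
    exact fun δ hδ => ⟨hγ.trans hδ.1, hδ.2⟩
  · refine Or.inl ⟨p, ⟨mem_plays_restrT.2 fun j hj => ?_, hpγ⟩, hpo⟩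
    rw [mem_plays_restrT.1 hp j hj]
    exact h _ hj.1 hj.2 fun h' => hpγ' (mem_extω_of_pref_mem_ext h')

/-- A play through a node of the play of `t` obeys `t` at all earlier nodes. -/
theorem guar_pref_play_subset {a : A} (t : List C → C) {n m : ℕ} (hnm : n ≤ m) :
    guar d v lt a (pref (play t) m) t ⊆ guar d v lt a (pref (play t) n) t := by
  rintro o ⟨q, ⟨hq, hqm⟩, hqo⟩
  rw [mem_extω_pref_iff] at hqm
  refine ⟨q, ⟨mem_plays_restrT.2 fun j hj => ?_, mem_extω_pref_iff.2 fun j hj => hqm j ?_⟩, hqo⟩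
  · rcases Nat.lt_or_ge j m with hjm | hjm
    · rw [hqm j hjm, play_eq, pref_eq_pref_iff.2 fun i hi => hqm i (hi.trans hjm)]
    · refine mem_plays_restrT.1 hq j ⟨?_, hj.2⟩
      rw [← pref_eq_pref_iff.2 hqm]
      exact pref_prefix q hjm
  · omega

end Guarantees

theorem Terminal.rel_of_notMem_of_mem {O : Type*} {r : O → O → Prop} [Std.Trichotomous r]
    {I : Set O} (hI : Terminal r I) {x y : O} (hx : x ∉ I) (hy : y ∈ I) : r x y := by
  rcases trichotomous_of r x y with h | rfl | h
  exacts [h, absurd hy hx, absurd (hI y x h hy) hx]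

theorem eq_of_forall_succ_eq {α : Type*} {f : ℕ → α} {m : ℕ}
    (h : ∀ i, m ≤ i → f (i + 1) = f i) {k : ℕ} (hk : m ≤ k) : f k = f m := by
  induction k, hk using Nat.le_induction with
  | base => rfl
  | succ k hk ih => rw [h k hk, ih]

def limitProfile {C : Type*} (s : ℕ → List C → C) (γ : List C) : C := s (γ.length + 1) γ

namespace IsDeepening

variable {C A O : Type*} {d : List C → A} {v : (ℕ → C) → O} {lt : A → O → O → Prop}
  {s : ℕ → List C → C}

theorem succ_apply_eq_of_notMem (hs : IsDeepening d v lt s) {i : ℕ} {δ : List C}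
    (hδ : ¬ (δ ∈ ext (pref (play (s i)) i) ∧ d δ = d (pref (play (s i)) i))) :
    s (i + 1) δ = s i δ := by
  by_cases hbest : guar d v lt (d (pref (play (s i)) i)) (pref (play (s i)) i) (s i)
      = bestGuar d v lt (d (pref (play (s i)) i)) (pref (play (s i)) i)
  · rw [(hs i).1 hbest]
  · obtain ⟨-, -, -, hout⟩ := (hs i).2 hbest
    exact hout δ hδ

theorem succ_apply_eq (hs : IsDeepening d v lt s) {i : ℕ} {δ : List C}
    (h : d δ = d (pref (play (s i)) i) →
      guar d v lt (d (pref (play (s i)) i)) (pref (play (s i)) i) (s i)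
        = bestGuar d v lt (d (pref (play (s i)) i)) (pref (play (s i)) i)) :
    s (i + 1) δ = s i δ := by
  by_cases hδ : d δ = d (pref (play (s i)) i)
  · rw [(hs i).1 (h hδ)]
  · exact hs.succ_apply_eq_of_notMem fun h' => hδ h'.2

theorem guar_succ_eq_bestGuar (hs : IsDeepening d v lt s) (i : ℕ) :
    guar d v lt (d (pref (play (s i)) i)) (pref (play (s i)) i) (s (i + 1))
      = bestGuar d v lt (d (pref (play (s i)) i)) (pref (play (s i)) i) := by
  by_cases hbest : guar d v lt (d (pref (play (s i)) i)) (pref (play (s i)) i) (s i)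
      = bestGuar d v lt (d (pref (play (s i)) i)) (pref (play (s i)) i)
  · rwa [(hs i).1 hbest]
  · obtain ⟨μ, hμ, hin, -⟩ := (hs i).2 hbest
    rw [← hμ]
    exact guar_congr fun δ hδ hdδ => hin δ ⟨hδ, hdδ⟩

/-- Stage `i` only modifies the profile at nodes of length at least `i`. -/
theorem apply_eq_limitProfile (hs : IsDeepening d v lt s) {δ : List C} {m : ℕ}
    (hm : δ.length < m) : s m δ = limitProfile s δ := by
  refine eq_of_forall_succ_eq (f := fun i => s i δ)
    (fun i hi => hs.succ_apply_eq_of_notMem fun hδ => ?_) hm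
  have := pref_length (play (s i)) i ▸ hδ.1.length_le
  omega

theorem play_eq_play_limitProfile (hs : IsDeepening d v lt s) {j m : ℕ} (hj : j < m) :
    play (s m) j = play (limitProfile s) j := by
  induction j using Nat.strong_induction_on with
  | _ j ih =>
    have hpref : pref (play (s m)) j = pref (play (limitProfile s)) j :=
      pref_eq_pref_iff.2 fun i hi => ih i hi (hi.trans hj)
    rw [play_eq (s m), hpref, hs.apply_eq_limitProfile (by rwa [pref_length]),
      ← play_eq (limitProfile s)]

theorem pref_play_eq_pref_play_limitProfile (hs : IsDeepening d v lt s) {n m : ℕ}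
    (hnm : n ≤ m) : pref (play (s m)) n = pref (play (limitProfile s)) n :=
  pref_eq_pref_iff.2 fun _ hj => hs.play_eq_play_limitProfile (by omega)

theorem guar_eq_bestGuar_of_lt (hs : IsDeepening d v lt s) {n m : ℕ} (hnm : n < m) :
    guar d v lt (d (pref (play (limitProfile s)) n)) (pref (play (limitProfile s)) n) (s m)
      = bestGuar d v lt (d (pref (play (limitProfile s)) n)) (pref (play (limitProfile s)) n) := by
  induction m, hnm using Nat.le_induction with
  | base =>
    simpa only [hs.pref_play_eq_pref_play_limitProfile le_rfl] using hs.guar_succ_eq_bestGuar n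
  | succ m hnm ih =>
    set γ := pref (play (limitProfile s)) n
    set a := d γ
    have hnm' : n ≤ m := by omega
    have hγ : pref (play (s m)) n = γ := hs.pref_play_eq_pref_play_limitProfile hnm'
    refine Set.Subset.antisymm ?_ (bestGuar_subset_guar _)
    rw [← ih]
    by_cases ha : d (pref (play (s m)) m) = a
    · have hbest := hs.guar_succ_eq_bestGuar m
      rw [ha] at hbest
      calc guar d v lt a γ (s (m + 1))
          ⊆ guar d v lt a γ (s m) ∪ guar d v lt a (pref (play (s m)) m) (s (m + 1)) :=
            guar_subset_union (hγ ▸ pref_prefix _ hnm')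
              fun δ _ _ hδ => hs.succ_apply_eq_of_notMem fun h => hδ h.1
        _ ⊆ guar d v lt a γ (s m) := by
            refine Set.union_subset le_rfl ?_
            rw [hbest, ← hγ]
            exact (bestGuar_subset_guar _).trans (guar_pref_play_subset _ hnm')
    · exact (guar_congr fun δ _ hδ =>
        hs.succ_apply_eq_of_notMem fun h => ha (h.2.symm.trans hδ)).le

theorem eventually_guar_eq_bestGuar (hs : IsDeepening d v lt s) {a : A}
    (hwo : IsWellOrder O (fun x y => lt a y x)) :
    ∃ M, ∀ i ≥ M, d (pref (play (limitProfile s)) i) = a →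
      guar d v lt a (pref (play (limitProfile s)) i) (s i)
        = bestGuar d v lt a (pref (play (limitProfile s)) i) := by
  have : IsTrans O (lt a) := (inferInstance : IsTrans O (Function.swap fun x y => lt a y x))
  have : Std.Trichotomous (lt a) :=
    (inferInstance : Std.Trichotomous (Function.swap fun x y => lt a y x))
  by_contra! hbad
  have hwit : ∀ M, ∃ i ≥ M, ∃ x, d (pref (play (limitProfile s)) i) = a ∧
      x ∈ guar d v lt a (pref (play (limitProfile s)) i) (s i) ∧
      x ∉ bestGuar d v lt a (pref (play (limitProfile s)) i) := fun M => by
    obtain ⟨i, hi, hai, hne⟩ := hbad M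
    obtain ⟨x, hx, hxbest⟩ :=
      Set.exists_of_ssubset ((bestGuar_subset_guar _).ssubset_of_ne hne.symm)
    exact ⟨i, hi, x, hai, hx, hxbest⟩
  -- an `lt a`-maximal outcome among the witnesses of all revisions by `a`
  obtain ⟨x, ⟨i, hai, -, hxbest⟩, hmax⟩ := hwo.wf.has_min
    {x | ∃ i, d (pref (play (limitProfile s)) i) = a ∧
      x ∈ guar d v lt a (pref (play (limitProfile s)) i) (s i) ∧
      x ∉ bestGuar d v lt a (pref (play (limitProfile s)) i)}
    (by obtain ⟨i, -, x, hx⟩ := hwit 0; exact ⟨x, i, hx⟩)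
  obtain ⟨j, hij, y, haj, hyj, hybest⟩ := hwit (i + 1)
  have hy : y ∈ bestGuar d v lt a (pref (play (limitProfile s)) i) := by
    rw [← hai, ← hs.guar_eq_bestGuar_of_lt hij, hai,
      ← hs.pref_play_eq_pref_play_limitProfile (m := j) (by omega)]
    rw [← hs.pref_play_eq_pref_play_limitProfile le_rfl] at hyj
    exact guar_pref_play_subset _ (by omega) hyj
  exact hmax y ⟨j, haj, hyj, hybest⟩ ((terminal_bestGuar _).rel_of_notMem_of_mem hxbest hy)

theorem eventually_apply_eq_limitProfile (hs : IsDeepening d v lt s) {a : A}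
    (hwo : IsWellOrder O (fun x y => lt a y x)) :
    ∃ M, ∀ m ≥ M, ∀ δ, d δ = a → s m δ = limitProfile s δ := by
  obtain ⟨M, hM⟩ := hs.eventually_guar_eq_bestGuar hwo
  refine ⟨M, fun m hm δ hδ => ?_⟩
  have hstable : ∀ i, m ≤ i → s (i + 1) δ = s i δ := fun i hi => hs.succ_apply_eq fun hδi => by
    rw [hs.pref_play_eq_pref_play_limitProfile le_rfl] at hδi ⊢
    have hai : d (pref (play (limitProfile s)) i) = a := hδi.symm.trans hδ
    rw [hai]
    exact hM i (hm.trans hi) hai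
  calc s m δ = s (max m (δ.length + 1)) δ :=
        (eq_of_forall_succ_eq (f := fun i => s i δ) hstable (le_max_left _ _)).symm
    _ = limitProfile s δ := hs.apply_eq_limitProfile (by omega)

end IsDeepening

theorem deepening_limit_best_general {C A O : Type*}
    (d : List C → A) (v : (ℕ → C) → O) (lt : A → O → O → Prop)
    (hwo : ∀ a, IsWellOrder O (fun x y => lt a y x))
    (s : ℕ → List C → C) (hs : IsDeepening d v lt s)
    (σ : List C → C) (hσ : ∀ γ : List C, σ γ = s (γ.length + 1) γ) :
    ∀ n : ℕ,
      guar d v lt (d (pref (play σ) n)) (pref (play σ) n) σ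
        = bestGuar d v lt (d (pref (play σ) n)) (pref (play σ) n) := by
  obtain rfl : σ = limitProfile s := funext hσ
  intro n
  obtain ⟨M, hM⟩ := hs.eventually_apply_eq_limitProfile (hwo (d (pref (play (limitProfile s)) n)))
  have hlt : n < max M (n + 1) := by omega
  exact (guar_congr fun δ _ hδ => (hM _ (le_max_left _ _) δ hδ).symm).trans
    (hs.guar_eq_bestGuar_of_lt hlt)

/-- Along the play p of the limit profile σ of the deepening
construction, every node owner's guarantee is the best guarantee. -/
theorem deepening_limit_best {C A O : Type*} [Nonempty C] [Nonempty A] [Nonempty O]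
    (d : List C → A) (v : (ℕ → C) → O) (lt : A → O → O → Prop)
    (hwo : ∀ a, IsWellOrder O (fun x y => lt a y x))
    (s : ℕ → List C → C) (hs : IsDeepening d v lt s)
    (σ : List C → C) (hσ : ∀ γ : List C, σ γ = s (γ.length + 1) γ) :
    ∀ n : ℕ,
      guar d v lt (d (pref (play σ) n)) (pref (play σ) n) σ
        = bestGuar d v lt (d (pref (play σ) n)) (pref (play σ) n) :=
  deepening_limit_best_general d v lt hwo s hs σ hσ
end

section
/- If some agent's preference has an infinite strictly ascending chain, there is an infinite sequential game (with that agent owning all nodes, with all outcome preimages under the valuation being open or closed sets) which has no Nash equilibrium. Concretely: with C having at least two elements, if o_0 ≺_a o_1 ≺_a o_2 ≺_a …, fix c ∈ C and define v(c^ω) := o_0 and v(c^n α) := o_{n+1} for α not starting with c; then the one-agent game has no Nash equilibrium. -/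
variable {C A O : Type*}

lemma hist_length (t : List C → C) (n : ℕ) : (hist t n).length = n := by
  induction n with
  | zero => rfl
  | succ k ih => simp [hist, ih]

lemma play_dev (c c' : C) (m : ℕ) :
    play (fun γ : List C => if γ.length = m then c' else c)
      = fun n => if n = m then c' else c := by
  funext n
  simp [play, hist_length]

/-- If an agent's preference has an infinite strictly ascending
chain, the one-agent game where v maps c^ω to o₀ and plays first deviating from c at
stage n to o_{n+1} has no Nash equilibrium: every strategy profile is strictly
improvable. -/
theorem no_nash_of_ascending_chain {C O : Type*} (prec : O → O → Prop)
    (o : ℕ → O) (hchain : ∀ n, prec (o n) (o (n + 1)))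
    (c c' : C) (hcc : c' ≠ c)
    (v : (ℕ → C) → O)
    (hv0 : v (fun _ => c) = o 0)
    (hv1 : ∀ (n : ℕ) (p : ℕ → C), (∀ i < n, p i = c) → p n ≠ c → v p = o (n + 1)) :
    ∀ s : List C → C, ∃ s' : List C → C, prec (v (play s)) (v (play s')) := by
  intro s
  by_cases h : ∀ n, play s n = c
  · refine ⟨fun γ => if γ.length = 0 then c' else c, ?_⟩
    have h1 : v (play s) = o 0 := by
      have : play s = fun _ => c := funext h
      rw [this, hv0]
    have h2 : v (play (fun γ : List C => if γ.length = 0 then c' else c)) = o 1 := by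
      rw [play_dev]
      exact hv1 0 _ (fun i hi => absurd hi (Nat.not_lt_zero i)) (by simp [hcc])
    rw [h1, h2]; exact hchain 0
  · push_neg at h
    classical
    obtain ⟨n, hn, hmin⟩ : ∃ n, play s n ≠ c ∧ ∀ i < n, ¬ play s i ≠ c :=
      ⟨Nat.find h, Nat.find_spec h, fun i hi => Nat.find_min h hi⟩
    refine ⟨fun γ => if γ.length = n + 1 then c' else c, ?_⟩
    have h1 : v (play s) = o (n + 1) := by
      refine hv1 n _ (fun i hi => ?_) hn
      by_contra hc; exact hmin i hi hc
    have h2 : v (play (fun γ : List C => if γ.length = n + 1 then c' else c)) = o (n + 2) := by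
      rw [play_dev]
      refine hv1 (n+1) _ (fun i hi => by simp [Nat.ne_of_lt hi]) (by simp [hcc])
    rw [h1, h2]; exact hchain (n + 1)
end
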